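/- arXiv:1608.04382 — 2 statements merged into one kernel-verified Lean document; each statement's English description precedes it below -/
import Mathlib

section
/- Let F : ℝ → (n×n real matrices) be differentiable at 0 with F(s) symmetric for every s, let u : ℝ → ℝⁿ be differentiable at 0 with ‖u(s)‖ = 1 for every s, and let λ : ℝ → ℝ be differentiable at 0, with F(s) u(s) = λ(s) u(s) for every s. Assume moreover that F(0) = λ₀ · u(0) u(0)ᵀ is the rank-one matrix with λ₀ = λ(0) > 0. Then ‖u'(0)‖ ≤ ‖F'(0)‖ / λ₀, where ‖F'(0)‖ denotes the ℓ²-operator norm of the derivative matrix F'(0) and ‖u'(0)‖ the Euclidean norm. -/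
/-!
Write `u₀ = u 0`, `λ₀ = λ 0` and `v = u'(0)`. Differentiating `‖u s‖ = 1` gives `⟪u₀, v⟫ = 0`,
and differentiating the eigen-equation `F s (u s) = λ s • u s` gives
`F'(0) u₀ + F(0) v = λ'(0) u₀ + λ₀ v`. Since `F(0) = λ₀ u₀ u₀ᵀ` kills `u₀^⊥`, the term `F(0) v`
vanishes, so `F'(0) u₀ = λ'(0) u₀ + λ₀ v` is an orthogonal decomposition and Pythagoras gives
`λ₀ ‖v‖ ≤ ‖F'(0) u₀‖ ≤ ‖F'(0)‖`.
-/

open Matrix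
open scoped Matrix.Norms.L2Operator

open WithLp
open scoped RealInnerProductSpace

section NormedSpace

variable {E : Type*} [NormedAddCommGroup E] [NormedSpace ℝ E]

theorem HasDerivAt.eigen_eq {F : ℝ → E →L[ℝ] E} {u : ℝ → E} {lam : ℝ → ℝ}
    {F' : E →L[ℝ] E} {u' : E} {lam' t : ℝ}
    (hF : HasDerivAt F F' t) (hu : HasDerivAt u u' t) (hlam : HasDerivAt lam lam' t)
    (heig : ∀ s, F s (u s) = lam s • u s) :
    F' (u t) + F t u' = lam' • u t + lam t • u' := by
  have hrhs : HasDerivAt (fun s => F s (u s)) (lam t • u' + lam' • u t) t := by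
    simpa only [heig] using hlam.fun_smul hu
  rw [(hF.clm_apply hu).unique hrhs, add_comm]

end NormedSpace

section InnerProductSpace

variable {E : Type*} [NormedAddCommGroup E] [InnerProductSpace ℝ E]

theorem HasDerivAt.inner_eq_zero_of_norm_eq_const {u : ℝ → E} {u' : E} {t c : ℝ}
    (hu : HasDerivAt u u' t) (hc : ∀ s, ‖u s‖ = c) : ⟪u t, u'⟫ = 0 := by
  have hconst : HasDerivAt (fun s => ⟪u s, u s⟫) 0 t := by
    simpa only [real_inner_self_eq_norm_sq, hc] using hasDerivAt_const t (c ^ 2)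
  have h := (hu.inner ℝ hu).unique hconst
  rw [real_inner_comm (u t)] at h
  linarith

theorem norm_le_opNorm_of_apply_eq_smul_add {T : E →L[ℝ] E} {x w : E} {a : ℝ}
    (hx : ‖x‖ = 1) (hxw : ⟪x, w⟫ = 0) (hT : T x = a • x + w) : ‖w‖ ≤ ‖T‖ := by
  have hpyth : ‖T x‖ ^ 2 = ‖a • x‖ ^ 2 + ‖w‖ ^ 2 := by
    rw [hT, norm_add_sq_real, real_inner_smul_left, hxw]
    ring
  calc ‖w‖ ≤ ‖T x‖ := (sq_le_sq₀ (norm_nonneg _) (norm_nonneg _)).mp (by nlinarith)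
    _ ≤ ‖T‖ * ‖x‖ := T.le_opNorm x
    _ = ‖T‖ := by rw [hx, mul_one]

theorem norm_deriv_eigenvector_le {F : ℝ → E →L[ℝ] E} {u : ℝ → E} {lam : ℝ → ℝ}
    {F' : E →L[ℝ] E} {u' : E} {lam' t : ℝ}
    (hF : HasDerivAt F F' t) (hu : HasDerivAt u u' t) (hlam : HasDerivAt lam lam' t)
    (hunit : ∀ s, ‖u s‖ = 1) (heig : ∀ s, F s (u s) = lam s • u s)
    (hker : ∀ w, ⟪u t, w⟫ = 0 → F t w = 0) (hpos : 0 < lam t) :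
    ‖u'‖ ≤ ‖F'‖ / lam t := by
  have horth : ⟪u t, u'⟫ = 0 := hu.inner_eq_zero_of_norm_eq_const hunit
  have hderiv : F' (u t) = lam' • u t + lam t • u' := by
    simpa only [hker u' horth, add_zero] using hF.eigen_eq hu hlam heig
  have hbound : ‖lam t • u'‖ ≤ ‖F'‖ :=
    norm_le_opNorm_of_apply_eq_smul_add (hunit t)
      (by rw [real_inner_smul_right, horth, mul_zero]) hderiv
  rw [norm_smul, Real.norm_of_nonneg hpos.le] at hbound
  rw [le_div_iff₀ hpos, mul_comm]
  exact hbound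

end InnerProductSpace

section EuclideanSpace

variable {ι : Type*} [Fintype ι]

theorem EuclideanSpace.norm_toLp_real (x : ι → ℝ) : ‖toLp 2 x‖ = √(∑ i, x i ^ 2) := by
  rw [← Real.sqrt_sq (norm_nonneg _), EuclideanSpace.real_norm_sq_eq]

theorem HasDerivAt.toLp {u : ℝ → ι → ℝ} {u' : ι → ℝ} {t : ℝ} (hu : HasDerivAt u u' t) :
    HasDerivAt (fun s => toLp 2 (u s)) (toLp 2 u') t :=
  (EuclideanSpace.equiv ι ℝ).symm.hasFDerivAt.comp_hasDerivAt t hu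

variable [DecidableEq ι]

theorem Matrix.toEuclideanCLM_vecMulVec_self_apply (x : ι → ℝ) (w : EuclideanSpace ℝ ι) :
    toEuclideanCLM (𝕜 := ℝ) (vecMulVec x x) w = ⟪toLp 2 x, w⟫ • toLp 2 x := by
  ext i
  simp [vecMulVec_mulVec, EuclideanSpace.inner_eq_star_dotProduct, dotProduct_comm, mul_comm]

theorem HasDerivAt.toEuclideanCLM {F : ℝ → Matrix ι ι ℝ} {F' : Matrix ι ι ℝ} {t : ℝ}
    (hF : HasDerivAt F F' t) :
    HasDerivAt (fun s => Matrix.toEuclideanCLM (𝕜 := ℝ) (F s))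
      (Matrix.toEuclideanCLM (𝕜 := ℝ) F') t :=
  let T := Matrix.toEuclideanCLM (𝕜 := ℝ) (n := ι)
  (LinearMap.toContinuousLinearMap T.toAlgEquiv.toLinearEquiv.toLinearMap).hasFDerivAt
    |>.comp_hasDerivAt t hF

end EuclideanSpace

theorem stmt7_general {n : ℕ} (F : ℝ → Matrix (Fin n) (Fin n) ℝ) (u : ℝ → Fin n → ℝ) (lam : ℝ → ℝ)
    (hF : DifferentiableAt ℝ F 0)
    (hu : DifferentiableAt ℝ u 0) (hunit : ∀ s, ∑ i, (u s i) ^ 2 = 1)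
    (hlam : DifferentiableAt ℝ lam 0)
    (heig : ∀ s, F s *ᵥ u s = lam s • u s)
    (hpos : 0 < lam 0)
    (hF0 : F 0 = lam 0 • Matrix.vecMulVec (u 0) (u 0)) :
    Real.sqrt (∑ i, (deriv u 0 i) ^ 2) ≤ ‖deriv F 0‖ / lam 0 := by
  have hker : ∀ w, ⟪toLp 2 (u 0), w⟫ = 0 → toEuclideanCLM (𝕜 := ℝ) (F 0) w = 0 := by
    intro w hw
    simp [hF0, toEuclideanCLM_vecMulVec_self_apply, hw]
  have key := norm_deriv_eigenvector_le hF.hasDerivAt.toEuclideanCLM hu.hasDerivAt.toLp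
    hlam.hasDerivAt (fun s => by rw [EuclideanSpace.norm_toLp_real, hunit, Real.sqrt_one])
    (fun s => by rw [toEuclideanCLM_toLp, heig, toLp_smul]) hker hpos
  rwa [EuclideanSpace.norm_toLp_real, l2_opNorm_toEuclideanCLM] at key

/-- Eigenvector-derivative bound from the proof of Theorem 4.1 (real symmetric case):
if `F s` is symmetric, `u s` is a Euclidean-unit eigenvector with eigenvalue `λ s`,
everything is differentiable at `0`, and `F 0 = λ₀ • u(0) u(0)ᵀ` is rank one with
`λ₀ = λ(0) > 0`, then `‖u'(0)‖ ≤ ‖F'(0)‖ / λ₀`, where `‖F'(0)‖` is the ℓ²-operator norm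
and `‖u'(0)‖` the Euclidean norm. -/
theorem stmt7 {n : ℕ} (F : ℝ → Matrix (Fin n) (Fin n) ℝ) (u : ℝ → Fin n → ℝ) (lam : ℝ → ℝ)
    (hF : DifferentiableAt ℝ F 0) (hsymm : ∀ s, (F s).IsSymm)
    (hu : DifferentiableAt ℝ u 0) (hunit : ∀ s, ∑ i, (u s i) ^ 2 = 1)
    (hlam : DifferentiableAt ℝ lam 0)
    (heig : ∀ s, F s *ᵥ u s = lam s • u s)
    (hpos : 0 < lam 0)
    (hF0 : F 0 = lam 0 • Matrix.vecMulVec (u 0) (u 0)) :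
    Real.sqrt (∑ i, (deriv u 0 i) ^ 2) ≤ ‖deriv F 0‖ / lam 0 :=
  stmt7_general F u lam hF hu hunit hlam heig hpos hF0
end

section
/- Let A_c and B be m×n real matrices with A_c ≠ 0 of rank 1 and ‖B‖ ≤ ‖A_c‖ (ℓ²-operator norms). Define F(s) = (A_c + sB)ᵀ(A_c + sB). Let u : ℝ → ℝⁿ be differentiable at 0 with ‖u(s)‖ = 1 for every s, and let λ : ℝ → ℝ be differentiable at 0, with F(s) u(s) = λ(s) u(s) for every s and λ(0) = ‖A_c‖² (the unique nonzero eigenvalue of F(0) = A_cᵀA_c). Then ‖u'(0)‖ ≤ 2. -/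
/-!
Differentiating `F(s) u(s) = λ(s) u(s)` at `0`, with `F(s) = F₀ + s C + s² D` where
`F₀ = A_cᵀ A_c` and `C = A_cᵀ B + Bᵀ A_c`, gives `F₀ u' + C u(0) = λ'(0) u(0) + λ(0) u'`,
and differentiating `‖u(s)‖² = 1` gives `u' ⊥ u(0)`. As `F₀` has rank one and `u(0)` is an
eigenvector for the nonzero eigenvalue `λ(0)`, the range of `F₀` is spanned by `u(0)`, so
`⟪u', F₀ u'⟫ = 0`. Pairing the differentiated equation with `u'` therefore leaves
`λ(0) ‖u'‖² = ⟪u', C u(0)⟫ ≤ ‖C‖ ‖u'‖ ≤ 2 ‖A_c‖² ‖u'‖`, and `λ(0) = ‖A_c‖²`.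
-/

open Matrix WithLp
open scoped Matrix.Norms.L2Operator

variable {ι m n : Type*} [Fintype ι]

theorem Matrix.transpose_add_smul_mul_add_smul [Fintype m] {R : Type*} [CommRing R]
    (A B : Matrix m n R) (s : R) :
    (A + s • B)ᵀ * (A + s • B) = Aᵀ * A + s • (Aᵀ * B + Bᵀ * A) + s ^ 2 • (Bᵀ * B) := by
  simp only [transpose_add, transpose_smul, Matrix.add_mul, Matrix.mul_add, Matrix.smul_mul,
    Matrix.mul_smul, smul_smul, smul_add, sq]
  abel

section Euclidean

theorem sqrt_sum_sq_eq_norm_toLp (v : ι → ℝ) : √(∑ i, v i ^ 2) = ‖toLp 2 v‖ := by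
  simp [EuclideanSpace.norm_eq]

theorem dotProduct_self_eq_norm_toLp_sq (v : ι → ℝ) : v ⬝ᵥ v = ‖toLp 2 v‖ ^ 2 := by
  rw [← sqrt_sum_sq_eq_norm_toLp, Real.sq_sqrt (by positivity)]
  simp [dotProduct, sq]

theorem dotProduct_mulVec_le [Fintype n] [DecidableEq n] (M : Matrix ι n ℝ) (w : ι → ℝ)
    (x : n → ℝ) :
    w ⬝ᵥ (M *ᵥ x) ≤ ‖toLp 2 w‖ * (‖M‖ * ‖toLp 2 x‖) := by
  calc w ⬝ᵥ (M *ᵥ x) = inner ℝ (toLp 2 w) (toLp 2 (M *ᵥ x)) := by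
        rw [EuclideanSpace.inner_toLp_toLp, dotProduct_comm]; rfl
    _ ≤ ‖toLp 2 w‖ * ‖toLp 2 (M *ᵥ x)‖ := real_inner_le_norm _ _
    _ ≤ ‖toLp 2 w‖ * (‖M‖ * ‖toLp 2 x‖) := by
        gcongr
        exact M.l2_opNorm_mulVec (toLp 2 x)

theorem Matrix.l2_opNorm_transpose [Fintype m] [Fintype n] [DecidableEq m] [DecidableEq n]
    (A : Matrix m n ℝ) : ‖Aᵀ‖ = ‖A‖ := by
  rw [← conjTranspose_eq_transpose_of_trivial, l2_opNorm_conjTranspose]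

theorem Matrix.l2_opNorm_transpose_mul_add_le [Fintype m] [Fintype n] [DecidableEq n]
    (A B : Matrix m n ℝ) : ‖Aᵀ * B + Bᵀ * A‖ ≤ 2 * (‖A‖ * ‖B‖) := by
  classical
  calc ‖Aᵀ * B + Bᵀ * A‖ ≤ ‖Aᵀ‖ * ‖B‖ + ‖Bᵀ‖ * ‖A‖ :=
        (norm_add_le _ _).trans (add_le_add (l2_opNorm_mul _ _) (l2_opNorm_mul _ _))
    _ = 2 * (‖A‖ * ‖B‖) := by rw [l2_opNorm_transpose, l2_opNorm_transpose]; ring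

end Euclidean

section Derivatives

variable {u : ℝ → ι → ℝ} {v : ι → ℝ} {t : ℝ}

theorem HasDerivAt.const_mulVec [Fintype m] (M : Matrix m ι ℝ) (hu : HasDerivAt u v t) :
    HasDerivAt (fun s => M *ᵥ u s) (M *ᵥ v) t :=
  (LinearMap.toContinuousLinearMap M.mulVecLin).hasFDerivAt.comp_hasDerivAt t hu

theorem dotProduct_eq_zero_of_hasDerivAt_of_sum_sq_eq {c : ℝ} (hu : HasDerivAt u v t)
    (hc : ∀ s, ∑ i, u s i ^ 2 = c) : v ⬝ᵥ u t = 0 := by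
  have hsum : HasDerivAt (fun s => ∑ i, u s i ^ 2) (∑ i, 2 * u t i ^ 1 * v i) t :=
    HasDerivAt.fun_sum fun i _ => (hasDerivAt_pi.1 hu i).pow 2
  rw [funext hc] at hsum
  have h := hsum.unique (hasDerivAt_const t c)
  simp only [pow_one, mul_assoc, ← Finset.mul_sum, mul_eq_zero, two_ne_zero, false_or] at h
  rw [dotProduct_comm]
  simpa [dotProduct, mul_comm] using h

theorem hasDerivAt_quadratic_pencil_mulVec [Fintype m] (P Q R : Matrix m ι ℝ)
    (hu : HasDerivAt u v 0) :
    HasDerivAt (fun s : ℝ => (P + s • Q + s ^ 2 • R) *ᵥ u s) (P *ᵥ v + Q *ᵥ u 0) 0 := by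
  simp only [Matrix.add_mulVec, Matrix.smul_mulVec]
  refine (((hu.const_mulVec P).add ((hasDerivAt_id 0).smul (hu.const_mulVec Q))).add
    ((hasDerivAt_pow 2 (0 : ℝ)).smul (hu.const_mulVec R))).congr_deriv ?_
  simp

theorem mulVec_add_eq_of_hasDerivAt_eigen_pencil (P Q R : Matrix ι ι ℝ) {lam : ℝ → ℝ}
    {lam' : ℝ} (hu : HasDerivAt u v 0) (hlam : HasDerivAt lam lam' 0)
    (heig : ∀ s, (P + s • Q + s ^ 2 • R) *ᵥ u s = lam s • u s) :
    P *ᵥ v + Q *ᵥ u 0 = lam' • u 0 + lam 0 • v := by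
  have h := hlam.smul hu
  rw [show lam • u = fun s => (P + s • Q + s ^ 2 • R) *ᵥ u s from (funext heig).symm] at h
  exact ((hasDerivAt_quadratic_pencil_mulVec P Q R hu).unique h).trans (add_comm _ _)

end Derivatives

section RankOne

variable {K : Type*} [Field K]

theorem Matrix.range_mulVecLin_eq_span_of_rank_eq_one [Fintype n] {M : Matrix m n K}
    (hM : M.rank = 1) {x : m → K} (hx0 : x ≠ 0) (hx : x ∈ LinearMap.range M.mulVecLin) :
    LinearMap.range M.mulVecLin = Submodule.span K {x} :=
  (Submodule.eq_of_le_of_finrank_le ((Submodule.span_singleton_le_iff_mem _ _).2 hx)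
    (by rw [finrank_span_singleton hx0]; exact hM.le)).symm

theorem Matrix.dotProduct_mulVec_self_eq_zero_of_rank_eq_one {M : Matrix ι ι K}
    (hM : M.rank = 1) {x : ι → K} {μ : K} (hμ : μ ≠ 0) (hx0 : x ≠ 0) (hMx : M *ᵥ x = μ • x)
    {w : ι → K} (hw : w ⬝ᵥ x = 0) : w ⬝ᵥ (M *ᵥ w) = 0 := by
  have hx : x ∈ LinearMap.range M.mulVecLin :=
    ⟨μ⁻¹ • x, by rw [mulVecLin_apply, mulVec_smul, hMx, smul_smul, inv_mul_cancel₀ hμ, one_smul]⟩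
  have hw' : M *ᵥ w ∈ Submodule.span K {x} := by
    rw [← range_mulVecLin_eq_span_of_rank_eq_one hM hx0 hx]
    exact ⟨w, rfl⟩
  obtain ⟨c, hc⟩ := Submodule.mem_span_singleton.1 hw'
  rw [← hc, dotProduct_smul, hw, smul_zero]

end RankOne

theorem norm_toLp_le_of_perturbed_eigen_eq [DecidableEq ι] {F₀ C : Matrix ι ι ℝ} {u₀ v : ι → ℝ}
    {μ lam₀ : ℝ} (hlam₀ : 0 < lam₀) (hu₀ : ‖toLp 2 u₀‖ = 1) (horth : v ⬝ᵥ u₀ = 0)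
    (hF₀ : v ⬝ᵥ (F₀ *ᵥ v) = 0) (heq : F₀ *ᵥ v + C *ᵥ u₀ = μ • u₀ + lam₀ • v) :
    ‖toLp 2 v‖ ≤ ‖C‖ / lam₀ := by
  have hpair : lam₀ * ‖toLp 2 v‖ ^ 2 = v ⬝ᵥ (C *ᵥ u₀) := by
    have h := congrArg (v ⬝ᵥ ·) heq
    simp only [dotProduct_add, dotProduct_smul, hF₀, horth, smul_eq_mul] at h
    rw [← dotProduct_self_eq_norm_toLp_sq]
    linarith
  have hle := dotProduct_mulVec_le C v u₀
  rw [hu₀, mul_one, ← hpair] at hle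
  rw [le_div_iff₀ hlam₀]
  nlinarith [norm_nonneg (toLp 2 v), norm_nonneg C]

/-- Explicit eigenvector-derivative bound `‖u'(0)‖ ≤ 2` from the proof of Theorem 4.1:
with `F(s) = (A_c + sB)ᵀ (A_c + sB)`, where `A_c ≠ 0` has rank one and `‖B‖ ≤ ‖A_c‖`
(ℓ²-operator norms), if `u s` is a Euclidean-unit eigenvector of `F s` with eigenvalue
`λ s`, both differentiable at `0`, and `λ(0) = ‖A_c‖²` (the unique nonzero eigenvalue of
`F(0) = A_cᵀ A_c`), then `‖u'(0)‖ ≤ 2`. -/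
theorem stmt9 {m n : ℕ} (Ac B : Matrix (Fin m) (Fin n) ℝ)
    (hne : Ac ≠ 0) (hrank : Ac.rank = 1) (hB : ‖B‖ ≤ ‖Ac‖)
    (u : ℝ → Fin n → ℝ) (lam : ℝ → ℝ)
    (hu : DifferentiableAt ℝ u 0) (hunit : ∀ s, ∑ i, (u s i) ^ 2 = 1)
    (hlam : DifferentiableAt ℝ lam 0)
    (heig : ∀ s : ℝ, ((Ac + s • B)ᵀ * (Ac + s • B)) *ᵥ u s = lam s • u s)
    (hlam0 : lam 0 = ‖Ac‖ ^ 2) :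
    Real.sqrt (∑ i, (deriv u 0 i) ^ 2) ≤ 2 := by
  set C := Acᵀ * B + Bᵀ * Ac
  have hpencil (s : ℝ) : (Acᵀ * Ac + s • C + s ^ 2 • (Bᵀ * B)) *ᵥ u s = lam s • u s := by
    rw [← transpose_add_smul_mul_add_smul]
    exact heig s
  have hu₀ : ‖toLp 2 (u 0)‖ = 1 := by rw [← sqrt_sum_sq_eq_norm_toLp, hunit, Real.sqrt_one]
  have hlam₀ : 0 < lam 0 := by
    rw [hlam0]
    exact pow_pos (norm_pos_iff.2 hne) 2
  have horth := dotProduct_eq_zero_of_hasDerivAt_of_sum_sq_eq hu.hasDerivAt hunit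
  have hF₀ : deriv u 0 ⬝ᵥ ((Acᵀ * Ac) *ᵥ deriv u 0) = 0 :=
    dotProduct_mulVec_self_eq_zero_of_rank_eq_one (by rw [rank_transpose_mul_self, hrank])
      hlam₀.ne' (fun h => by simp [h] at hu₀) (by simpa using hpencil 0) horth
  rw [sqrt_sum_sq_eq_norm_toLp]
  calc ‖toLp 2 (deriv u 0)‖ ≤ ‖C‖ / lam 0 :=
        norm_toLp_le_of_perturbed_eigen_eq hlam₀ hu₀ horth hF₀
          (mulVec_add_eq_of_hasDerivAt_eigen_pencil _ _ _ hu.hasDerivAt hlam.hasDerivAt hpencil)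
    _ ≤ 2 := by
        rw [div_le_iff₀ hlam₀, hlam0]
        nlinarith [l2_opNorm_transpose_mul_add_le Ac B, norm_nonneg B, norm_nonneg Ac]
end
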